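/- For i = 1, ..., k, let T_i be a tree of order n_i and diameter d_i ≥ 2 with a single weight center w_i, and suppose each T_i satisfies rn(T_i) = (n_i - 1)(d_i + ε(T_i)) - 2L(T_i) + ε(T_i). Let T_{w_k} be the tree obtained by identifying the weight centers w_1, ..., w_k of T_1, ..., T_k with a single vertex w, and let d = diam(T_{w_k}). Then T_{w_k} satisfies rn(T_{w_k}) = (|V(T_{w_k})| - 1)(d + ε(T_{w_k})) - 2L(T_{w_k}) + ε(T_{w_k}), and rn(T_{w_k}) = Σ_{i=1}^{k} [rn(T_i) + (n_i - 1)(d - d_i)] - k + 1. -/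

import Mathlib

/-!
Liu's counting argument (list the vertices by increasing label and use
`d(x, y) ≤ d(x, c) + d(y, c)` for consecutive ones) gives, for every connected graph on `n ≥ 2`
vertices and every vertex `c`, `rn G ≥ (n - 1)(diam G + 1) - 2 ∑ᵤ d(u, c) + 1`; from the unique
weight center this is the bound `(n - 1)(d + ε) - 2L + ε` of the statement. When a tree `T i`
attains it, the two end vertices of an optimal labeling are its weight center and a neighbour of
it. Stretching that labeling by `D - dᵢ` per step (`D` the diameter of the wedge) keeps it radio
for `D`, and the stretched labelings of `T 1, …, T k`, laid one after the other, form a radio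
labeling of the wedge, since two parts only meet in `w`. Its span is
`∑ᵢ [rn(T i) + (nᵢ - 1)(D - dᵢ)] - k + 1`, which is Liu's bound for the wedge from `w`, its unique
weight center.
-/

namespace Radio

variable {V : Type*}

def span [Fintype V] (f : V → ℕ) : ℕ :=
  Finset.univ.sup fun p : V × V => ((f p.1 : ℤ) - (f p.2 : ℤ)).natAbs

def IsRadioLabeling [Fintype V] (G : SimpleGraph V) (f : V → ℕ) : Prop :=
  ∀ u v : V, u ≠ v → G.diam + 1 ≤ G.dist u v + ((f u : ℤ) - (f v : ℤ)).natAbs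

noncomputable def radioNumber [Fintype V] (G : SimpleGraph V) : ℕ :=
  sInf { n | ∃ f : V → ℕ, IsRadioLabeling G f ∧ span f = n }

noncomputable def weightFrom [Fintype V] (G : SimpleGraph V) (v : V) : ℕ :=
  ∑ u : V, G.dist u v

noncomputable def weight [Fintype V] (G : SimpleGraph V) : ℕ :=
  sInf (Set.range (weightFrom G))

def weightCenters [Fintype V] (G : SimpleGraph V) : Set V :=
  { v | ∀ x : V, weightFrom G v ≤ weightFrom G x }

noncomputable def level [Fintype V] (G : SimpleGraph V) (u : V) : ℕ :=
  sInf (G.dist u '' weightCenters G)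

noncomputable def totalLevel [Fintype V] (G : SimpleGraph V) : ℕ :=
  ∑ u : V, level G u

/-- `ε(G) = 1` if `G` has exactly one weight center, and `0` otherwise
(for a tree the other case is exactly that of two adjacent weight centers). -/
noncomputable def epsilon [Fintype V] (G : SimpleGraph V) : ℕ :=
  if (weightCenters G).ncard = 1 then 1 else 0

open SimpleGraph Finset

theorem _root_.SimpleGraph.Connected.dist_le_diam [Finite V] {G : SimpleGraph V}
    (hG : G.Connected) (u v : V) : G.dist u v ≤ G.diam :=
  have := hG.nonempty
  SimpleGraph.dist_le_diam (connected_iff_ediam_ne_top.mp hG)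

def IsRadioKLabeling (G : SimpleGraph V) (D : ℕ) (f : V → ℕ) : Prop :=
  ∀ u v : V, u ≠ v → D + 1 ≤ G.dist u v + ((f u : ℤ) - (f v : ℤ)).natAbs

structure IsRadioKLabelingFromTo (G : SimpleGraph V) (D : ℕ) (c z : V) (g : V → ℕ) : Prop where
  isRadioKLabeling : IsRadioKLabeling G D g
  apply_start : g c = 0
  le_apply_end : ∀ v, g v ≤ g z
  adj : G.Adj z c

section FromTo

variable {G : SimpleGraph V} {D : ℕ} {c z : V} {g : V → ℕ}

theorem IsRadioKLabelingFromTo.add_one_le (hg : IsRadioKLabelingFromTo G D c z g) {v : V}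
    (hv : v ≠ c) : D + 1 ≤ G.dist v c + g v := by
  simpa [hg.apply_start] using hg.isRadioKLabeling v c hv

theorem IsRadioKLabelingFromTo.add_one_le_dist_add (hG : G.Connected) (hD : 1 ≤ D)
    (hg : IsRadioKLabelingFromTo G D c z g) (u : V) : g u + 1 ≤ G.dist u c + g z := by
  have hz := dist_eq_one_iff_adj.mpr hg.adj
  rcases eq_or_ne u z with rfl | hu
  · omega
  have := hg.isRadioKLabeling u z hu
  have htri := hG.dist_triangle (u := u) (v := c) (w := z)
  rw [SimpleGraph.dist_comm (u := c), hz] at htri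
  have := hg.le_apply_end u
  omega

end FromTo

/-- Liu's lower bound for `rn G`, computed from the vertex `c`; from the unique weight center of a
tree it is `(n - 1)(diam + ε) - 2L + ε`. -/
noncomputable def liuBound [Fintype V] (G : SimpleGraph V) (c : V) : ℤ :=
  ((Fintype.card V : ℤ) - 1) * (G.diam + 1) - 2 * ∑ u, (G.dist u c : ℤ) + 1

section Labelings

variable [Fintype V] {G : SimpleGraph V} {f : V → ℕ}

theorem IsRadioLabeling.injective (hG : G.Connected) (hf : IsRadioLabeling G f) :
    Function.Injective f := by
  intro u v huv
  by_contra hne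
  have := hf u v hne
  rw [huv, sub_self, Int.natAbs_zero] at this
  have := hG.dist_le_diam u v
  omega

theorem le_span (f : V → ℕ) (u v : V) : ((f u : ℤ) - (f v : ℤ)).natAbs ≤ span f :=
  Finset.le_sup (f := fun p : V × V => ((f p.1 : ℤ) - (f p.2 : ℤ)).natAbs) (mem_univ (u, v))

theorem span_le {m : ℕ} (h : ∀ u v : V, ((f u : ℤ) - (f v : ℤ)).natAbs ≤ m) : span f ≤ m :=
  Finset.sup_le fun p _ => h p.1 p.2

theorem span_eq_sub {a b : V} (ha : ∀ v, f a ≤ f v) (hb : ∀ v, f v ≤ f b) :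
    span f = f b - f a := by
  refine le_antisymm (span_le fun u v => ?_) ?_
  · have := ha u; have := ha v; have := hb u; have := hb v
    omega
  · have := le_span f b a
    omega

theorem IsRadioLabeling.congr_natAbs {g : V → ℕ} (hf : IsRadioLabeling G f)
    (h : ∀ u v, ((g u : ℤ) - g v).natAbs = ((f u : ℤ) - f v).natAbs) : IsRadioLabeling G g :=
  fun u v huv => h u v ▸ hf u v huv

theorem exists_isRadioLabeling_span_eq_radioNumber (G : SimpleGraph V) :
    ∃ f : V → ℕ, IsRadioLabeling G f ∧ span f = radioNumber G := by
  let f₀ : V → ℕ := fun v => (G.diam + 1) * Fintype.equivFin V v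
  suffices hf₀ : IsRadioLabeling G f₀ from
    Nat.sInf_mem (s := { n | ∃ f, IsRadioLabeling G f ∧ span f = n }) ⟨_, f₀, hf₀, rfl⟩
  intro u v huv
  have hne : (Fintype.equivFin V u : ℕ) ≠ Fintype.equivFin V v := by simpa [Fin.val_inj] using huv
  have : G.diam + 1 ≤ (G.diam + 1) * ((Fintype.equivFin V u : ℤ) - Fintype.equivFin V v).natAbs :=
    Nat.le_mul_of_pos_right _ (by omega)
  simp only [f₀, Nat.cast_mul, ← mul_sub, Int.natAbs_mul, Int.natAbs_natCast]
  omega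

theorem radioNumber_le_span (hf : IsRadioLabeling G f) : radioNumber G ≤ span f :=
  Nat.sInf_le ⟨f, hf, rfl⟩

theorem radioNumber_eq_zero_of_subsingleton [Subsingleton V] : radioNumber G = 0 := by
  obtain ⟨f, -, hf⟩ := exists_isRadioLabeling_span_eq_radioNumber G
  rw [← hf]
  exact Nat.eq_zero_of_le_zero (span_le fun u v => by simp [Subsingleton.elim u v])

end Labelings

theorem ne_of_forall_le_of_forall_le [Nontrivial V] {f : V → ℕ} (hf : Function.Injective f)
    {a b : V} (ha : ∀ v, f a ≤ f v) (hb : ∀ v, f v ≤ f b) : a ≠ b := by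
  rintro rfl
  obtain ⟨x, y, hxy⟩ := exists_pair_ne V
  exact hxy (hf ((le_antisymm (hb x) (ha x)).trans (le_antisymm (hb y) (ha y)).symm))

section LowerBound

variable [Fintype V] {G : SimpleGraph V} {f : V → ℕ}

/-- Liu's counting argument on the vertices of `S` listed by increasing label: consecutive
labels differ by at least `diam G + 1 - d(x, c) - d(y, c)`. -/
theorem IsRadioLabeling.sum_le_sub (hG : G.Connected) (hf : IsRadioLabeling G f) (c : V)
    (S : Finset V) :
    ∀ a ∈ S, ∀ b ∈ S, (∀ v ∈ S, f a ≤ f v) → (∀ v ∈ S, f v ≤ f b) →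
      ∑ u ∈ S, ((G.diam : ℤ) + 1 - 2 * G.dist u c) + G.dist a c + G.dist b c
        ≤ (f b : ℤ) - f a + G.diam + 1 := by
  classical
  induction S using Finset.induction_on_max_value f with
  | empty => simp
  | insert b s hbs hmax ih =>
    intro a ha b' hb' hamin hb'max
    obtain rfl : b' = b :=
      hf.injective hG (le_antisymm ((mem_insert.mp hb').elim (fun h => (congrArg f h).le) (hmax b'))
        (hb'max b (mem_insert_self b s)))
    rw [sum_insert hbs]
    rcases s.eq_empty_or_nonempty with rfl | hs
    · obtain rfl : a = b' := by simpa using ha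
      rw [sum_empty]
      omega
    obtain ⟨b₁, hb₁, hb₁max⟩ := s.exists_max_image f hs
    have hab : a ≠ b' := by
      rintro rfl
      obtain ⟨v, hv⟩ := hs
      exact hbs (hf.injective hG (le_antisymm (hmax v hv) (hamin v (mem_insert_of_mem hv))) ▸ hv)
    have hb₁b : b₁ ≠ b' := fun h => hbs (h ▸ hb₁)
    have hs_le := ih a ((mem_insert.mp ha).resolve_left hab) b₁ hb₁
      (fun v hv => hamin v (mem_insert_of_mem hv)) hb₁max
    have hgap := hf b' b₁ hb₁b.symm
    have htri : G.dist b' b₁ ≤ G.dist b' c + G.dist b₁ c := by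
      rw [dist_comm (u := b₁)]
      exact hG.dist_triangle
    have := hmax b₁ hb₁
    omega

theorem IsRadioLabeling.le_span_add (hG : G.Connected) (hf : IsRadioLabeling G f) (c : V)
    {a b : V} (ha : ∀ v, f a ≤ f v) (hb : ∀ v, f v ≤ f b) :
    liuBound G c - 1 + G.dist a c + G.dist b c ≤ span f := by
  have := hf.sum_le_sub hG c univ a (mem_univ a) b (mem_univ b) (fun v _ => ha v)
    (fun v _ => hb v)
  rw [liuBound, span_eq_sub ha hb, Nat.cast_sub (hb a)]
  simp only [sum_sub_distrib, sum_const, card_univ, nsmul_eq_mul, ← mul_sum] at this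
  linarith

theorem liuBound_le_radioNumber [Nontrivial V] (hG : G.Connected) (c : V) :
    liuBound G c ≤ radioNumber G := by
  obtain ⟨f, hf, hspan⟩ := exists_isRadioLabeling_span_eq_radioNumber G
  obtain ⟨a, ha⟩ := Finite.exists_min f
  obtain ⟨b, hb⟩ := Finite.exists_max f
  have hab := ne_of_forall_le_of_forall_le (hf.injective hG) ha hb
  have := hf.le_span_add hG c ha hb
  have : 1 ≤ G.dist a c + G.dist b c := by
    by_contra h
    have hac : a = c := hG.dist_eq_zero_iff.mp (by omega)
    have hbc : b = c := hG.dist_eq_zero_iff.mp (by omega)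
    exact hab (hac.trans hbc.symm)
  rw [← hspan]
  omega

end LowerBound

section Tight

variable [Fintype V] {G : SimpleGraph V}

/-- For an optimal labeling, `sum_le_sub` leaves room only for `d(a, c) + d(b, c) ≤ 1` at its
first and last vertices `a` and `b`; reversing the labels if needed puts `c` first. -/
theorem exists_isRadioKLabelingFromTo_diam_of_radioNumber_eq (hG : G.Connected) {c : V}
    (h : radioNumber G = liuBound G c) :
    ∃ f : V → ℕ, ∃ z : V, IsRadioKLabelingFromTo G G.diam c z f ∧ f z = radioNumber G := by
  have : Nontrivial V := by
    by_contra hV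
    have : Subsingleton V := not_nontrivial_iff_subsingleton.mp hV
    have hcard : Fintype.card V = 1 := Fintype.card_eq_one_iff.mpr ⟨c, (Subsingleton.elim · c)⟩
    simp [liuBound, radioNumber_eq_zero_of_subsingleton, Subsingleton.elim _ c, hcard] at h
  obtain ⟨f, hf, hspan⟩ := exists_isRadioLabeling_span_eq_radioNumber G
  obtain ⟨a, ha⟩ := Finite.exists_min f
  obtain ⟨b, hb⟩ := Finite.exists_max f
  have hab := ne_of_forall_le_of_forall_le (hf.injective hG) ha hb
  have hle := hf.le_span_add hG c ha hb
  rw [hspan] at hle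
  rw [span_eq_sub ha hb] at hspan
  rcases Nat.eq_zero_or_pos (G.dist a c) with hac | hac
  · obtain rfl := hG.dist_eq_zero_iff.mp hac
    refine ⟨fun v => f v - f a, b, ⟨hf.congr_natAbs fun u v => ?_, Nat.sub_self _,
      fun v => Nat.sub_le_sub_right (hb v) _, dist_eq_one_iff_adj.mp ?_⟩, hspan⟩
    · have := ha u; have := ha v
      omega
    · have := hG.pos_dist_of_ne hab.symm
      omega
  · obtain rfl : b = c := hG.dist_eq_zero_iff.mp (by omega)
    refine ⟨fun v => f b - f v, a, ⟨hf.congr_natAbs fun u v => ?_, Nat.sub_self _,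
      fun v => Nat.sub_le_sub_left (ha v) _, dist_eq_one_iff_adj.mp (by omega)⟩, hspan⟩
    have := hb u; have := hb v
    omega

end Tight

section Stretch

variable [Fintype V] {G : SimpleGraph V} {f : V → ℕ} {s : ℕ}

def stretch (f : V → ℕ) (s : ℕ) (v : V) : ℕ :=
  f v + s * #{u | f u < f v}

theorem stretch_le_stretch {u v : V} (h : f u ≤ f v) : stretch f s u ≤ stretch f s v := by
  have : #{x | f x < f u} ≤ #{x | f x < f v} :=
    card_le_card (monotone_filter_right _ fun _ _ hx => hx.trans_le h)
  unfold stretch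
  gcongr

theorem natAbs_sub_add_le_natAbs_sub_stretch (hf : Function.Injective f) {u v : V}
    (huv : u ≠ v) :
    ((f u : ℤ) - f v).natAbs + s ≤ ((stretch f s u : ℤ) - stretch f s v).natAbs := by
  wlog h : f u < f v generalizing u v
  · have := this huv.symm (lt_of_le_of_ne (not_lt.mp h) (hf.ne huv.symm))
    omega
  have hcard : #{x | f x < f u} + 1 ≤ #{x | f x < f v} := by
    refine card_lt_card (ssubset_iff_of_subset ?_ |>.mpr ⟨u, ?_⟩)
    · exact monotone_filter_right _ fun _ _ hx => hx.trans h
    · simp [h]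
  have : s * #{x | f x < f u} + s ≤ s * #{x | f x < f v} := by
    simpa [mul_add] using Nat.mul_le_mul_left s hcard
  unfold stretch
  omega

theorem stretch_le (f : V → ℕ) (s : ℕ) (v : V) :
    stretch f s v ≤ f v + s * (Fintype.card V - 1) := by
  classical
  have : #{u | f u < f v} ≤ Fintype.card V - 1 := by
    rw [← card_univ, ← card_erase_of_mem (mem_univ v)]
    exact card_le_card fun u hu => mem_erase.mpr ⟨fun h => by simp [h] at hu, mem_univ u⟩
  unfold stretch
  gcongr

theorem stretch_of_forall_le {c : V} (h : ∀ v, f c ≤ f v) : stretch f s c = f c := by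
  simp [stretch, filter_eq_empty_iff, h]

theorem IsRadioKLabelingFromTo.stretch {D : ℕ} {c z : V}
    (hf : IsRadioKLabelingFromTo G D c z f) (hinj : Function.Injective f) :
    IsRadioKLabelingFromTo G (D + s) c z (stretch f s) where
  isRadioKLabeling u v huv := by
    have := hf.isRadioKLabeling u v huv
    have := natAbs_sub_add_le_natAbs_sub_stretch (s := s) hinj huv
    omega
  apply_start := by
    rw [stretch_of_forall_le fun v => hf.apply_start ▸ Nat.zero_le _, hf.apply_start]
  le_apply_end v := stretch_le_stretch (hf.le_apply_end v)
  adj := hf.adj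

theorem exists_isRadioKLabelingFromTo_of_radioNumber_eq (hG : G.Connected) {c : V}
    (h : radioNumber G = liuBound G c) {D : ℕ} (hD : G.diam ≤ D) :
    ∃ g : V → ℕ, ∃ z : V, IsRadioKLabelingFromTo G D c z g ∧
      (g z : ℤ) ≤ radioNumber G + ((Fintype.card V : ℤ) - 1) * (D - G.diam) := by
  obtain ⟨f, z, hf, hfz⟩ := exists_isRadioKLabelingFromTo_diam_of_radioNumber_eq hG h
  have hs := hf.stretch (s := D - G.diam) (IsRadioLabeling.injective hG hf.isRadioKLabeling)
  rw [Nat.add_sub_cancel' hD] at hs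
  refine ⟨stretch f (D - G.diam), z, hs, ?_⟩
  have := stretch_le f (D - G.diam) z
  have hn : 1 ≤ Fintype.card V := Fintype.card_pos_iff.mpr ⟨c⟩
  rw [hfz] at this
  zify [hD, hn] at this
  linarith

end Stretch

theorem le_add_dist_of_adj {G : SimpleGraph V} (hG : G.Connected) (δ : V → ℕ)
    (hδ : ∀ x y, G.Adj x y → δ y ≤ δ x + 1) (u v : V) : δ v ≤ δ u + G.dist u v := by
  obtain ⟨p, hp⟩ := (hG u v).exists_walk_length_eq_dist
  rw [← hp]
  clear hp
  induction p with
  | nil => simp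
  | cons hxy _ ih =>
    have := hδ _ _ hxy
    rw [Walk.length_cons]
    omega

/-- `H` is the one-point union of the graphs `T i` with the vertices `w i` all identified with
`w₀`: each `φ i` embeds `T i`, the images cover `H`, two of them meet only in `w₀`, and the
edges of `H` are the images of the edges of the `T i`. -/
structure IsWedge {k : ℕ} {V : Fin k → Type*} (T : ∀ i, SimpleGraph (V i)) (w : ∀ i, V i)
    {W : Type*} (H : SimpleGraph W) (w₀ : W) (φ : ∀ i, V i → W) : Prop where
  injective : ∀ i, Function.Injective (φ i)
  map_base : ∀ i, φ i (w i) = w₀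
  exists_map_eq : ∀ x : W, ∃ i v, φ i v = x
  map_eq_base_of_map_eq : ∀ i j, i ≠ j → ∀ a b, φ i a = φ j b → φ i a = w₀
  adj_iff : ∀ x y : W, H.Adj x y ↔ ∃ i a b, φ i a = x ∧ φ i b = y ∧ (T i).Adj a b

/-- The retraction of the wedge onto its part `i`, collapsing every other part to `w i`. -/
noncomputable def wedgeRetract {k : ℕ} {V : Fin k → Type*} (w : ∀ i, V i) {W : Type*}
    (φ : ∀ i, V i → W) (i : Fin k) : W → V i :=
  Function.extend (φ i) id fun _ => w i

namespace IsWedge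

variable {k : ℕ} {V : Fin k → Type*} {T : ∀ i, SimpleGraph (V i)} {w : ∀ i, V i}
  {W : Type*} {H : SimpleGraph W} {w₀ : W} {φ : ∀ i, V i → W}

theorem map_eq_base_iff (hH : IsWedge T w H w₀ φ) {i : Fin k} {v : V i} :
    φ i v = w₀ ↔ v = w i := by
  rw [← hH.map_base i, (hH.injective i).eq_iff]

theorem eq_of_map_eq (hH : IsWedge T w H w₀ φ) {i j : Fin k} {a : V i} {b : V j}
    (h : φ i a = φ j b) (ha : a ≠ w i) : i = j := by
  by_contra hij
  exact ha (hH.map_eq_base_iff.mp (hH.map_eq_base_of_map_eq i j hij a b h))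

def hom (hH : IsWedge T w H w₀ φ) (i : Fin k) : T i →g H where
  toFun := φ i
  map_rel' h := (hH.adj_iff _ _).mpr ⟨i, _, _, rfl, rfl, h⟩

@[simp]
theorem hom_apply (hH : IsWedge T w H w₀ φ) (i : Fin k) (v : V i) : hH.hom i v = φ i v := rfl

theorem connected (hH : IsWedge T w H w₀ φ) (hT : ∀ i, (T i).Connected) : H.Connected := by
  have hreach (x : W) : H.Reachable x w₀ := by
    obtain ⟨i, v, rfl⟩ := hH.exists_map_eq x
    simpa [hH.map_base i] using ((hT i) v (w i)).map (hH.hom i)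
  have : Nonempty W := ⟨w₀⟩
  exact ⟨fun x y => (hreach x).trans (hreach y).symm⟩

noncomputable def equiv (hH : IsWedge T w H w₀ φ) : Option (Σ i, {v : V i // v ≠ w i}) ≃ W :=
  Equiv.ofBijective (fun o => o.elim w₀ fun p => φ p.1 p.2) <| by
    refine ⟨?_, fun x => ?_⟩
    · rintro (_ | ⟨i, u, hu⟩) (_ | ⟨j, v, hv⟩) h <;> simp only [Option.elim] at h
      · rfl
      · exact absurd (hH.map_eq_base_iff.mp h.symm) hv
      · exact absurd (hH.map_eq_base_iff.mp h) hu
      · obtain rfl := hH.eq_of_map_eq h hu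
        obtain rfl := hH.injective i h
        rfl
    · obtain ⟨i, v, rfl⟩ := hH.exists_map_eq x
      by_cases hv : v = w i
      · exact ⟨none, by simp [hv, hH.map_base]⟩
      · exact ⟨some ⟨i, v, hv⟩, rfl⟩

@[simp]
theorem equiv_none (hH : IsWedge T w H w₀ φ) : hH.equiv none = w₀ := rfl

@[simp]
theorem equiv_some (hH : IsWedge T w H w₀ φ) (i : Fin k) (v : {v : V i // v ≠ w i}) :
    hH.equiv (some ⟨i, v⟩) = φ i v := rfl

theorem sum_eq [∀ i, Fintype (V i)] [Fintype W] {M : Type*} [AddCommGroup M]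
    (hH : IsWedge T w H w₀ φ) (F : W → M) :
    ∑ x, F x = F w₀ + ∑ i, (∑ v, F (φ i v) - F w₀) := by
  classical
  rw [← hH.equiv.sum_comp, Fintype.sum_option, Fintype.sum_sigma]
  congr 1
  refine sum_congr rfl fun i _ => ?_
  simp only [equiv_some]
  rw [← sum_subtype (univ.erase (w i)) (by simp) (fun v => F (φ i v)),
    sum_erase_eq_sub (mem_univ _), hH.map_base]

theorem retract_map_self (hH : IsWedge T w H w₀ φ) (i : Fin k) (v : V i) :
    wedgeRetract w φ i (φ i v) = v :=
  (hH.injective i).extend_apply _ _ _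

theorem retract_map_of_ne (hH : IsWedge T w H w₀ φ) {i j : Fin k} (hji : j ≠ i) (v : V j) :
    wedgeRetract w φ i (φ j v) = w i := by
  by_cases h : ∃ a, φ i a = φ j v
  · obtain ⟨a, ha⟩ := h
    rw [← ha, hH.retract_map_self]
    exact hH.map_eq_base_iff.mp (hH.map_eq_base_of_map_eq i j hji.symm a v ha)
  · exact Function.extend_apply' _ _ _ h

theorem exists_adj_retract (hH : IsWedge T w H w₀ φ) {x y : W} (hxy : H.Adj x y) :
    ∃ p, (T p).Adj (wedgeRetract w φ p x) (wedgeRetract w φ p y) ∧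
      ∀ i ≠ p, wedgeRetract w φ i x = wedgeRetract w φ i y := by
  obtain ⟨p, a, b, rfl, rfl, hab⟩ := (hH.adj_iff x y).mp hxy
  refine ⟨p, by simpa only [hH.retract_map_self] using hab, fun i hi => ?_⟩
  rw [hH.retract_map_of_ne (Ne.symm hi), hH.retract_map_of_ne (Ne.symm hi)]

theorem dist_retract_le_add_one (hH : IsWedge T w H w₀ φ) (hT : ∀ i, (T i).Connected)
    {x y : W} (hxy : H.Adj x y) (i : Fin k) (a : V i) :
    (T i).dist a (wedgeRetract w φ i y) ≤ (T i).dist a (wedgeRetract w φ i x) + 1 := by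
  obtain ⟨p, hp, hne⟩ := hH.exists_adj_retract hxy
  by_cases hpi : p = i
  · subst hpi
    rw [← dist_eq_one_iff_adj.mpr hp]
    exact (hT p).dist_triangle
  · rw [hne i (Ne.symm hpi)]
    exact Nat.le_succ _

theorem dist_map_map [Fintype W] (hH : IsWedge T w H w₀ φ) (hT : ∀ i, (T i).Connected)
    (i : Fin k) (a b : V i) : H.dist (φ i a) (φ i b) = (T i).dist a b := by
  refine le_antisymm ?_ ?_
  · obtain ⟨p, hp⟩ := ((hT i) a b).exists_walk_length_eq_dist
    have := dist_le (p.map (hH.hom i))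
    rwa [Walk.length_map, hp] at this
  · simpa [hH.retract_map_self] using le_add_dist_of_adj (hH.connected hT)
      (fun x => (T i).dist a (wedgeRetract w φ i x))
      (fun _ _ hxy => hH.dist_retract_le_add_one hT hxy i a) (φ i a) (φ i b)

theorem dist_map_base [Fintype W] (hH : IsWedge T w H w₀ φ) (hT : ∀ i, (T i).Connected)
    (i : Fin k) (v : V i) : H.dist (φ i v) w₀ = (T i).dist v (w i) := by
  rw [← hH.map_base i, hH.dist_map_map hT]

theorem diam_le [Fintype W] (hH : IsWedge T w H w₀ φ) (hT : ∀ i, (T i).Connected) (i : Fin k) :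
    (T i).diam ≤ H.diam := by
  have := (hT i).nonempty
  obtain ⟨a, b, hab⟩ := (T i).exists_dist_eq_diam
  rw [← hab, ← hH.dist_map_map hT]
  exact (hH.connected hT).dist_le_diam _ _

theorem dist_map_map_of_ne [Fintype W] (hH : IsWedge T w H w₀ φ) (hT : ∀ i, (T i).Connected)
    {i j : Fin k} (hij : i ≠ j) (a : V i) (b : V j) :
    H.dist (φ i a) (φ j b) = (T i).dist a (w i) + (T j).dist b (w j) := by
  refine le_antisymm ?_ ?_
  · rw [← hH.dist_map_base hT, ← hH.dist_map_base hT j, dist_comm (u := φ j b)]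
    exact (hH.connected hT).dist_triangle
  · let δ (x : W) : ℕ :=
      (T i).dist a (wedgeRetract w φ i x) + (T j).dist (w j) (wedgeRetract w φ j x)
    -- an edge lies in a single part, so it moves at most one of the two retractions
    have hδ (x y : W) (hxy : H.Adj x y) : δ y ≤ δ x + 1 := by
      obtain ⟨p, -, hne⟩ := hH.exists_adj_retract hxy
      have hi := hH.dist_retract_le_add_one hT hxy i a
      have hj := hH.dist_retract_le_add_one hT hxy j (w j)
      by_cases hpi : p = i
      · have := hne j (hpi ▸ Ne.symm hij)
        simp only [δ, this] at hi ⊢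
        omega
      · have := hne i (Ne.symm hpi)
        simp only [δ, this] at hj ⊢
        omega
    have := le_add_dist_of_adj (hH.connected hT) δ hδ (φ i a) (φ j b)
    simpa [δ, hH.retract_map_self, hH.retract_map_of_ne hij, hH.retract_map_of_ne (Ne.symm hij),
      dist_comm (u := w j)] using this

end IsWedge

section WeightCenters

variable [Fintype V] {G : SimpleGraph V} {c : V}

theorem weightCenters_eq_singleton_iff :
    weightCenters G = {c} ↔ ∀ v ≠ c, weightFrom G c < weightFrom G v := by
  refine ⟨fun h v hv => ?_, fun h => Set.eq_singleton_iff_unique_mem.mpr ⟨fun x => ?_, ?_⟩⟩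
  · have hc : ∀ x, weightFrom G c ≤ weightFrom G x := (h ▸ rfl : c ∈ weightCenters G)
    have hv : ¬∀ x, weightFrom G v ≤ weightFrom G x := (h ▸ hv : v ∉ weightCenters G)
    simp only [not_forall, not_le] at hv
    obtain ⟨x, hx⟩ := hv
    exact (hc x).trans_lt hx
  · rcases eq_or_ne x c with rfl | hx
    · exact le_rfl
    · exact (h x hx).le
  · intro v hv
    by_contra hvc
    exact (hv c).not_gt (h v hvc)

theorem epsilon_eq_one (h : weightCenters G = {c}) : epsilon G = 1 := by
  simp [epsilon, h]

theorem totalLevel_eq (h : weightCenters G = {c}) : totalLevel G = ∑ u, G.dist u c := by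
  simp [totalLevel, level, h]

end WeightCenters

namespace IsWedge

variable {k : ℕ} {V : Fin k → Type*} [∀ i, Fintype (V i)] {T : ∀ i, SimpleGraph (V i)}
  {w : ∀ i, V i} {W : Type*} [Fintype W] {H : SimpleGraph W} {w₀ : W} {φ : ∀ i, V i → W}

theorem card_sub_one (hH : IsWedge T w H w₀ φ) :
    (Fintype.card W : ℤ) - 1 = ∑ i, ((Fintype.card (V i) : ℤ) - 1) := by
  have := hH.sum_eq fun _ => (1 : ℤ)
  simp only [sum_const, card_univ, nsmul_eq_mul, mul_one] at this
  linarith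

theorem sum_dist_base (hH : IsWedge T w H w₀ φ) (hT : ∀ i, (T i).Connected) :
    ∑ x, (H.dist x w₀ : ℤ) = ∑ i, ∑ v, ((T i).dist v (w i) : ℤ) := by
  simp [hH.sum_eq fun x => (H.dist x w₀ : ℤ), hH.dist_map_base hT]

theorem liuBound_base (hH : IsWedge T w H w₀ φ) (hT : ∀ i, (T i).Connected) :
    liuBound H w₀ = ∑ i, (liuBound (T i) (w i) +
      ((Fintype.card (V i) : ℤ) - 1) * (H.diam - (T i).diam)) - k + 1 := by
  have hpart (i : Fin k) : liuBound (T i) (w i) +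
      ((Fintype.card (V i) : ℤ) - 1) * (H.diam - (T i).diam) =
      ((Fintype.card (V i) : ℤ) - 1) * (H.diam + 1) - 2 * ∑ v, ((T i).dist v (w i) : ℤ) + 1 := by
    rw [liuBound]
    ring
  rw [sum_congr rfl fun i _ => hpart i, liuBound, hH.card_sub_one, hH.sum_dist_base hT]
  simp only [sum_add_distrib, sum_sub_distrib, ← sum_mul, ← mul_sum, sum_const, card_univ,
    Fintype.card_fin, nsmul_eq_mul, mul_one]
  ring

/-- Moving from `w₀` to a vertex `a` of part `j` changes the distances to part `j` as in `T j`,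
and increases the distances to every other part by `d(a, w j)`. -/
theorem weightFrom_base_lt (hH : IsWedge T w H w₀ φ) (hT : ∀ i, (T i).Connected) {j : Fin k}
    (hj : weightCenters (T j) = {w j}) {a : V j} (ha : a ≠ w j) :
    weightFrom H w₀ < weightFrom H (φ j a) := by
  classical
  let F (x : W) : ℤ := H.dist x (φ j a) - H.dist x w₀
  have hF₀ : F w₀ = (T j).dist a (w j) := by
    simp [F, dist_comm (u := w₀), hH.dist_map_base hT]
  have hself : ∑ v, F (φ j v) - F w₀ =
      (weightFrom (T j) a : ℤ) - weightFrom (T j) (w j) - (T j).dist a (w j) := by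
    simp [F, hF₀, weightFrom, hH.dist_map_map hT, hH.dist_map_base hT]
  have hother (i : Fin k) (hi : i ≠ j) : 0 ≤ ∑ v, F (φ i v) - F w₀ := by
    have hF (v : V i) : F (φ i v) = (T j).dist a (w j) := by
      simp [F, hH.dist_map_map_of_ne hT hi, hH.dist_map_base hT]
    have hn : (1 : ℤ) ≤ Fintype.card (V i) := by exact_mod_cast Fintype.card_pos_iff.mpr ⟨w i⟩
    simp only [hF, hF₀, sum_const, card_univ, nsmul_eq_mul]
    nlinarith [((T j).dist a (w j)).cast_nonneg (α := ℤ)]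
  have hsum := hH.sum_eq F
  rw [← add_sum_erase _ _ (mem_univ j), hself] at hsum
  have := sum_nonneg (s := univ.erase j) fun i hi => hother i (ne_of_mem_erase hi)
  have hdiff : ∑ x, F x = (weightFrom H (φ j a) : ℤ) - weightFrom H w₀ := by
    simp [F, weightFrom, sum_sub_distrib]
  have : (weightFrom (T j) (w j) : ℤ) < weightFrom (T j) a := by
    exact_mod_cast (weightCenters_eq_singleton_iff.mp hj) a ha
  have : (weightFrom H w₀ : ℤ) < weightFrom H (φ j a) := by linarith
  exact_mod_cast this

theorem weightCenters_eq (hH : IsWedge T w H w₀ φ) (hT : ∀ i, (T i).Connected)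
    (hWC : ∀ i, weightCenters (T i) = {w i}) : weightCenters H = {w₀} := by
  refine weightCenters_eq_singleton_iff.mpr fun x hx => ?_
  obtain ⟨i, v, rfl⟩ := hH.exists_map_eq x
  exact hH.weightFrom_base_lt hT (hWC i) fun h => hx (hH.map_eq_base_iff.mpr h)

end IsWedge

theorem sum_Iio_add_le {ι : Type*} [LinearOrder ι] [LocallyFiniteOrderBot ι] (a : ι → ℕ)
    {i : ι} {s : Finset ι} (h : ∀ q ≤ i, q ∈ s) : ∑ q ∈ Iio i, a q + a i ≤ ∑ q ∈ s, a q := by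
  rw [add_comm, ← sum_insert notMem_Iio_self, Iio_insert]
  exact sum_le_sum_of_subset fun q hq => h q (mem_Iic.mp hq)

namespace IsWedge

variable {k : ℕ} {V : Fin k → Type*} {T : ∀ i, SimpleGraph (V i)} {w : ∀ i, V i}
  {W : Type*} {H : SimpleGraph W} {w₀ : W} {φ : ∀ i, V i → W}

/-- The labelings of the parts one after the other, `w₀` getting `0`. Consecutive parts overlap
by one label, which the edge from the last vertex `z (i - 1)` of part `i - 1` to `w₀` pays for. -/
noncomputable def concatLabeling (hH : IsWedge T w H w₀ φ) (g : ∀ i, V i → ℕ) (z : ∀ i, V i)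
    (x : W) : ℕ :=
  (hH.equiv.symm x).elim 0 fun p => ∑ q ∈ Iio p.1, (g q (z q) - 1) + g p.1 p.2

theorem concatLabeling_base (hH : IsWedge T w H w₀ φ) (g : ∀ i, V i → ℕ) (z : ∀ i, V i) :
    hH.concatLabeling g z w₀ = 0 := by
  rw [concatLabeling, hH.equiv.symm_apply_eq.mpr hH.equiv_none.symm]
  rfl

theorem concatLabeling_map (hH : IsWedge T w H w₀ φ) (g : ∀ i, V i → ℕ) (z : ∀ i, V i)
    {i : Fin k} {v : V i} (hv : v ≠ w i) :
    hH.concatLabeling g z (φ i v) = ∑ q ∈ Iio i, (g q (z q) - 1) + g i v := by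
  rw [concatLabeling, hH.equiv.symm_apply_eq.mpr (hH.equiv_some i ⟨v, hv⟩).symm]
  rfl

variable [Fintype W]

theorem one_le_diam (hH : IsWedge T w H w₀ φ) (hT : ∀ i, (T i).Connected) {i : Fin k}
    {z : V i} (hz : (T i).Adj z (w i)) : 1 ≤ H.diam := by
  rw [← dist_eq_one_iff_adj.mpr hz, ← hH.dist_map_base hT]
  exact (hH.connected hT).dist_le_diam _ _

theorem isRadioLabeling_concatLabeling (hH : IsWedge T w H w₀ φ) (hT : ∀ i, (T i).Connected)
    {g : ∀ i, V i → ℕ} {z : ∀ i, V i}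
    (hg : ∀ i, IsRadioKLabelingFromTo (T i) H.diam (w i) (z i) (g i)) :
    IsRadioLabeling H (hH.concatLabeling g z) := by
  have cross (i j : Fin k) (hij : i < j) (u : V i) (hu : u ≠ w i) (v : V j) (hv : v ≠ w j) :
      H.diam + 1 ≤ H.dist (φ i u) (φ j v) +
        ((hH.concatLabeling g z (φ i u) : ℤ) - hH.concatLabeling g z (φ j v)).natAbs := by
    have := sum_Iio_add_le (fun q => g q (z q) - 1) fun q hq => mem_Iio.mpr (hq.trans_lt hij)
    have := (hg j).add_one_le hv
    have := (hg i).add_one_le_dist_add (hT i) (hH.one_le_diam hT (hg i).adj) u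
    rw [hH.dist_map_map_of_ne hT hij.ne, concatLabeling_map _ _ _ hu, concatLabeling_map _ _ _ hv]
    omega
  intro x y hxy
  obtain ⟨a, rfl⟩ := hH.equiv.surjective x
  obtain ⟨b, rfl⟩ := hH.equiv.surjective y
  rcases a with _ | ⟨i, u, hu⟩ <;> rcases b with _ | ⟨j, v, hv⟩
  · exact absurd rfl hxy
  · have := (hg j).add_one_le hv
    simp only [equiv_none, equiv_some, concatLabeling_base, concatLabeling_map _ _ _ hv,
      SimpleGraph.dist_comm (u := w₀), hH.dist_map_base hT]
    omega
  · have := (hg i).add_one_le hu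
    simp only [equiv_none, equiv_some, concatLabeling_base, concatLabeling_map _ _ _ hu,
      hH.dist_map_base hT]
    omega
  · simp only [equiv_some] at hxy ⊢
    rcases lt_trichotomy i j with hij | rfl | hij
    · exact cross i j hij u hu v hv
    · have := (hg i).isRadioKLabeling u v fun h => hxy (h ▸ rfl)
      rw [concatLabeling_map _ _ _ hu, concatLabeling_map _ _ _ hv, hH.dist_map_map hT]
      omega
    · have := cross j i hij v hv u hu
      rw [SimpleGraph.dist_comm]
      omega

theorem radioNumber_le (hH : IsWedge T w H w₀ φ) (hT : ∀ i, (T i).Connected)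
    {g : ∀ i, V i → ℕ} {z : ∀ i, V i}
    (hg : ∀ i, IsRadioKLabelingFromTo (T i) H.diam (w i) (z i) (g i)) :
    (radioNumber H : ℤ) ≤ ∑ i, (g i (z i) : ℤ) - k + 1 := by
  have hgz_pos (i : Fin k) : 1 ≤ g i (z i) := by
    simpa [(hg i).apply_start] using
      (hg i).add_one_le_dist_add (hT i) (hH.one_le_diam hT (hg i).adj) (w i)
  have hle (x : W) : hH.concatLabeling g z x ≤ ∑ i, (g i (z i) - 1) + 1 := by
    obtain ⟨_ | ⟨i, v, hv⟩, rfl⟩ := hH.equiv.surjective x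
    · simp [concatLabeling_base]
    · have := sum_Iio_add_le (fun q => g q (z q) - 1) (i := i) fun q _ => mem_univ q
      have := (hg i).le_apply_end v
      simp only [equiv_some, concatLabeling_map _ _ _ hv]
      omega
  have := radioNumber_le_span (hH.isRadioLabeling_concatLabeling hT hg)
  have : span (hH.concatLabeling g z) ≤ ∑ i, (g i (z i) - 1) + 1 :=
    span_le fun x y => by have := hle x; have := hle y; omega
  have hcast : ((∑ i, (g i (z i) - 1) : ℕ) : ℤ) = ∑ i, (g i (z i) : ℤ) - k := by
    push_cast [Nat.cast_sub (hgz_pos _)]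
    simp [sum_sub_distrib]
  omega

end IsWedge
theorem radioNumber_glue_weightCenters_general {k : ℕ}
    {V : Fin k → Type*} [∀ i, Fintype (V i)]
    (T : ∀ i, SimpleGraph (V i)) (w : ∀ i, V i)
    (hTree : ∀ i, (T i).IsTree)
    (hWC : ∀ i, weightCenters (T i) = {w i})
    (hrn : ∀ i, (radioNumber (T i) : ℤ) =
      ((Fintype.card (V i) : ℤ) - 1) * (((T i).diam : ℤ) + (epsilon (T i) : ℤ))
        - 2 * (totalLevel (T i) : ℤ) + (epsilon (T i) : ℤ))
    {W : Type*} [Fintype W]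
    (H : SimpleGraph W) (w₀ : W) (φ : ∀ i, V i → W)
    (hinj : ∀ i, Function.Injective (φ i))
    (hbase : ∀ i, φ i (w i) = w₀)
    (hcover : ∀ x : W, ∃ i v, φ i v = x)
    (hmeet : ∀ i j, i ≠ j → ∀ a b, φ i a = φ j b → φ i a = w₀)
    (hAdj : ∀ x y : W, H.Adj x y ↔ ∃ i a b, φ i a = x ∧ φ i b = y ∧ (T i).Adj a b) :
    (radioNumber H : ℤ) =
        ((Fintype.card W : ℤ) - 1) * ((H.diam : ℤ) + (epsilon H : ℤ))
          - 2 * (totalLevel H : ℤ) + (epsilon H : ℤ) ∧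
    (radioNumber H : ℤ) =
        (∑ i, ((radioNumber (T i) : ℤ)
          + ((Fintype.card (V i) : ℤ) - 1) * ((H.diam : ℤ) - ((T i).diam : ℤ))))
          - (k : ℤ) + 1 := by
  have hT (i : Fin k) := (hTree i).connected
  have hH : IsWedge T w H w₀ φ := ⟨hinj, hbase, hcover, hmeet, hAdj⟩
  have hrnT (i : Fin k) : radioNumber (T i) = liuBound (T i) (w i) := by
    rw [hrn i, epsilon_eq_one (hWC i), totalLevel_eq (hWC i), liuBound]
    push_cast
    ring
  choose g z hg hgz using fun i =>
    exists_isRadioKLabelingFromTo_of_radioNumber_eq (hT i) (hrnT i) (hH.diam_le hT i)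
  have hbound : liuBound H w₀ = ∑ i, ((radioNumber (T i) : ℤ) +
      ((Fintype.card (V i) : ℤ) - 1) * ((H.diam : ℤ) - (T i).diam)) - k + 1 := by
    simp only [hrnT]
    exact hH.liuBound_base hT
  obtain ⟨i, -, -⟩ := hcover w₀
  have : Nontrivial W := ⟨⟨φ i (z i), w₀, fun h => (hg i).adj.ne (hH.map_eq_base_iff.mp h)⟩⟩
  have hrnH : radioNumber H = liuBound H w₀ := by
    refine le_antisymm ?_ (liuBound_le_radioNumber (hH.connected hT) w₀)
    linarith [hH.radioNumber_le hT hg, sum_le_sum fun i (_ : i ∈ univ) => hgz i]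
  have hWCH := hH.weightCenters_eq hT hWC
  refine ⟨?_, hrnH.trans hbound⟩
  rw [hrnH, liuBound, epsilon_eq_one hWCH, totalLevel_eq hWCH]
  push_cast
  ring

/-- For `i = 1, …, k`, let `T i` be a tree of order `n i` and diameter
`d i ≥ 2` with a single weight center `w i`, each attaining the lower bound
`rn(T i) = (n i - 1)(d i + ε(T i)) - 2 L(T i) + ε(T i)`. Let `H = T_{w_k}` be the tree
obtained by identifying the weight centers `w 1, …, w k` into a single vertex `w₀`
(described here by injections `φ i : T i → H` whose images cover `H`, meet pairwise only
in `w₀`, and carry exactly the edges of `H`). Then `H` also attains the lower bound, and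
`rn(H) = ∑ i [rn(T i) + (n i - 1)(d - d i)] - k + 1`, where `d = diam H`. -/
theorem radioNumber_glue_weightCenters {k : ℕ} (hk : 1 ≤ k)
    {V : Fin k → Type*} [∀ i, Fintype (V i)]
    (T : ∀ i, SimpleGraph (V i)) (w : ∀ i, V i)
    (hTree : ∀ i, (T i).IsTree)
    (hdiam : ∀ i, 2 ≤ (T i).diam)
    (hWC : ∀ i, weightCenters (T i) = {w i})
    (hrn : ∀ i, (radioNumber (T i) : ℤ) =
      ((Fintype.card (V i) : ℤ) - 1) * (((T i).diam : ℤ) + (epsilon (T i) : ℤ))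
        - 2 * (totalLevel (T i) : ℤ) + (epsilon (T i) : ℤ))
    {W : Type*} [Fintype W]
    (H : SimpleGraph W) (w₀ : W) (φ : ∀ i, V i → W)
    (hinj : ∀ i, Function.Injective (φ i))
    (hbase : ∀ i, φ i (w i) = w₀)
    (hcover : ∀ x : W, ∃ i v, φ i v = x)
    (hmeet : ∀ i j, i ≠ j → ∀ a b, φ i a = φ j b → φ i a = w₀)
    (hAdj : ∀ x y : W, H.Adj x y ↔ ∃ i a b, φ i a = x ∧ φ i b = y ∧ (T i).Adj a b) :
    (radioNumber H : ℤ) =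
        ((Fintype.card W : ℤ) - 1) * ((H.diam : ℤ) + (epsilon H : ℤ))
          - 2 * (totalLevel H : ℤ) + (epsilon H : ℤ) ∧
    (radioNumber H : ℤ) =
        (∑ i, ((radioNumber (T i) : ℤ)
          + ((Fintype.card (V i) : ℤ) - 1) * ((H.diam : ℤ) - ((T i).diam : ℤ))))
          - (k : ℤ) + 1 :=
  radioNumber_glue_weightCenters_general T w hTree hWC hrn H w₀ φ hinj hbase hcover hmeet hAdj

end Radio
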